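/- Let p, q ≥ 2 be coprime integers and let k ≥ 1 be an integer, and set r := pqk + 1 (so that p, q, r are pairwise coprime and r ≥ 2). Then R(p, q, r) = −1, i.e., 2/(pqr) + Σ over the three entries m ∈ {p, q, r} of (2/m)·Σ_{j=1}^{m−1} cot(πj(pqr)/m²)·cot(πj/m)·sin²(πj/m) equals −1. -/

import Mathlib

/-!
Since `cot x · sin² x = sin (2x) / 2`, the term of `R` attached to `m`, with total product
`A = m c`, is `(1/m) Σ_j cot (π j c / m) sin (2π j / m)`. Substituting `j ↦ b j`, where `b` is
the inverse of `c` modulo `m`, turns it into `(1/m) Σ_j cot (π j / m) sin (2π j b / m)`, and this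
equals `1 - 2b/m`: the sum telescopes in `b` through
`cot θ · (sin (φ + 2θ) - sin φ) = cos (φ + 2θ) + cos φ` and the cosine sums over the `m`-th roots
of unity. For `r = pqk + 1` the inverse of `pq` modulo `r` is `r - k`, and the inverses `a` of
`q` modulo `p` and `b` of `p` modulo `q` satisfy `qa + pb = pq + 1`; so the three terms add up
to `-1 - 2/(pqr)`.
-/

open Real

noncomputable section

/-- The summand of the Fintushel–Stern invariant attached to the multiplicity `m`:
`(2/m)·Σ_{j=1}^{m-1} cot(πjA/m²)·cot(πj/m)·sin²(πj/m)`, where `A` is the (real) product of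
the multiplicities. -/
def fsTerm (A : ℝ) (m : ℕ) : ℝ :=
  (2 / (m : ℝ)) * ∑ j ∈ Finset.Icc 1 (m - 1),
    Real.cot (π * j * A / (m : ℝ) ^ 2) * Real.cot (π * j / (m : ℝ)) *
      Real.sin (π * j / (m : ℝ)) ^ 2

open Finset Function

theorem Function.Periodic.sum_range_comp_mul {M : Type*} [AddCommMonoid M] {f : ℕ → M}
    {m a : ℕ} (hf : Periodic f m) (ha : a.Coprime m) :
    ∑ j ∈ range m, f (a * j) = ∑ j ∈ range m, f j := by
  obtain _ | n := m
  · simp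
  set F : ZMod (n + 1) → M := fun x => f x.val
  have hF : ∀ j, f j = F j := fun j => by simp [F, ZMod.val_natCast, hf.map_mod_nat]
  have hval : ∀ i : Fin (n + 1), ((i : ℕ) : ZMod (n + 1)) = i :=
    fun i => ZMod.natCast_zmod_val (n := n + 1) i
  simp only [hF, Nat.cast_mul]
  rw [← Fin.sum_univ_eq_sum_range (fun j => F (a * j)),
    ← Fin.sum_univ_eq_sum_range (fun j => F j)]
  simp only [hval]
  exact (ZMod.unitOfCoprime a ha).mulLeft_bijective.sum_comp F

theorem Finset.sum_range_eq_add_sum_Icc {M : Type*} [AddCommMonoid M] (f : ℕ → M) {m : ℕ}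
    (hm : 0 < m) : ∑ j ∈ range m, f j = f 0 + ∑ j ∈ Icc 1 (m - 1), f j := by
  rw [range_eq_Ico, sum_eq_sum_Ico_succ_bot hm]
  rfl

theorem Nat.exists_mul_add_mul_eq_mul_add_one {p q : ℕ} (hp : 2 ≤ p) (hq : 2 ≤ q)
    (h : p.Coprime q) : ∃ a b, 0 < a ∧ a < p ∧ 0 < b ∧ b < q ∧ q * a + p * b = p * q + 1 := by
  obtain ⟨a, hap, ha⟩ := Nat.exists_mul_mod_eq_one_of_coprime h.symm (by omega)
  have hdiv := Nat.div_add_mod (q * a) p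
  rw [ha] at hdiv
  set t := q * a / p
  have ha0 : 0 < a := Nat.pos_of_ne_zero fun h0 => by simp [h0] at ha
  have ht0 : 0 < t := Nat.pos_of_ne_zero fun h0 => by rw [h0] at hdiv; nlinarith
  have htq : t < q := by nlinarith
  refine ⟨a, q - t, ha0, hap, by omega, by omega, ?_⟩
  zify [htq.le] at hdiv ⊢
  linear_combination (-1 : ℤ) * hdiv

namespace Real

theorem cot_add_int_mul_pi (x : ℝ) (n : ℤ) : cot (x + n * π) = cot x := by
  rw [cot_eq_cos_div_sin, cot_eq_cos_div_sin, cos_add_int_mul_pi, sin_add_int_mul_pi]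
  exact mul_div_mul_left _ _ (zpow_ne_zero n (by norm_num))

theorem cot_mul_sin_sq (x : ℝ) : cot x * sin x ^ 2 = sin (2 * x) / 2 := by
  rw [cot_eq_cos_div_sin, sin_two_mul]
  rcases eq_or_ne (sin x) 0 with h | h
  · simp [h]
  · field_simp

theorem cot_mul_sin_add_two_mul {θ : ℝ} (hθ : sin θ ≠ 0) (φ : ℝ) :
    cot θ * sin (φ + 2 * θ) = cot θ * sin φ + (cos (φ + 2 * θ) + cos φ) := by
  rw [cot_eq_cos_div_sin, sin_add, cos_add, sin_two_mul, cos_two_mul]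
  field_simp
  linear_combination (2 * cos θ * sin φ) * sin_sq_add_cos_sq θ

theorem sin_pi_mul_div_pos {j m : ℕ} (hj : 0 < j) (hjm : j < m) : 0 < sin (π * j / m) := by
  have hjm' : (j : ℝ) < m := by exact_mod_cast hjm
  apply sin_pos_of_pos_of_lt_pi
  · have : (0 : ℝ) < j := by exact_mod_cast hj
    have : (0 : ℝ) < m := by linarith
    positivity
  · rw [div_lt_iff₀ (by linarith)]
    nlinarith [pi_pos]

theorem sum_range_cos_two_pi_mul_div (m c : ℕ) :
    ∑ j ∈ range m, cos (2 * π * j * c / m) = if m ∣ c then (m : ℝ) else 0 := by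
  rcases Nat.eq_zero_or_pos m with rfl | hm
  · simp
  have hm' : (m : ℝ) ≠ 0 := by positivity
  split_ifs with hdvd
  · obtain ⟨d, rfl⟩ := hdvd
    have hone : ∀ j : ℕ, cos (2 * π * j * (m * d : ℕ) / m) = 1 := fun j => by
      rw [← cos_nat_mul_two_pi (j * d)]
      push_cast
      field_simp
    rw [sum_congr rfl fun j _ => hone j]
    simp
  · have hne : ∀ k : ℤ, 2 * π * c / m ≠ k * (2 * π) := by
      intro k hk
      have hck : (c : ℝ) = k * m := by
        field_simp at hk
        nlinarith [pi_pos]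
      exact hdvd (Int.natCast_dvd_natCast.mp ⟨k, by exact_mod_cast hck.trans (mul_comm _ _)⟩)
    have hsum := sum_cos m hne 0
    rw [show m * (2 * π * c / m) / 2 = c * π by field_simp, sin_nat_mul_pi, zero_mul,
      zero_div] at hsum
    rw [← hsum]
    exact sum_congr rfl fun j _ => by ring_nf

theorem sum_Icc_cos_two_pi_mul_div {m : ℕ} (hm : 0 < m) (c : ℕ) :
    ∑ j ∈ Icc 1 (m - 1), cos (2 * π * j * c / m) = (if m ∣ c then (m : ℝ) else 0) - 1 := by
  rw [← sum_range_cos_two_pi_mul_div, sum_range_eq_add_sum_Icc _ hm]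
  simp

theorem sum_Icc_cot_mul_sin {m b : ℕ} (hb : 0 < b) (hbm : b < m) :
    ∑ j ∈ Icc 1 (m - 1), cot (π * j / m) * sin (2 * π * j * b / m) = m - 2 * b := by
  have hm : 0 < m := hb.trans hbm
  let T : ℕ → ℝ := fun n => ∑ j ∈ Icc 1 (m - 1), cot (π * j / m) * sin (2 * π * j * n / m)
  let C : ℕ → ℝ := fun n => ∑ j ∈ Icc 1 (m - 1), cos (2 * π * j * n / m)
  have step : ∀ n, T (n + 1) = T n + (C (n + 1) + C n) := fun n => by
    simp only [T, C, ← sum_add_distrib]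
    refine sum_congr rfl fun j hj => ?_
    have hj' := mem_Icc.mp hj
    have hsin := (sin_pi_mul_div_pos (j := j) (m := m) (by omega) (by omega)).ne'
    rw [show 2 * π * j * (n + 1 : ℕ) / m = 2 * π * j * n / m + 2 * (π * j / m) by
      push_cast; ring, cot_mul_sin_add_two_mul hsin]
  have hT0 : T 0 = 0 := by simp [T]
  have hC0 : C 0 = m - 1 := by simp [C, sum_Icc_cos_two_pi_mul_div hm]
  have hC : ∀ n, 0 < n → n < m → C n = -1 := fun n hn hnm => by
    simp [C, sum_Icc_cos_two_pi_mul_div hm, Nat.not_dvd_of_pos_of_lt hn hnm]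
  show T b = m - 2 * b
  induction b, hb using Nat.le_induction with
  | base =>
    rw [step, hT0, hC 1 one_pos hbm, hC0]
    push_cast
    ring
  | succ n hn ih =>
    rw [step, ih (by omega), hC (n + 1) (by omega) hbm, hC n hn (by omega)]
    push_cast
    ring

theorem sum_range_cot_mul_sin_eq {m b c : ℕ} (hcb : c * b ≡ 1 [MOD m]) :
    ∑ j ∈ range m, cot (π * j * c / m) * sin (2 * π * j / m) =
      ∑ j ∈ range m, cot (π * j / m) * sin (2 * π * j * b / m) := by
  rcases Nat.eq_zero_or_pos m with rfl | hm
  · simp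
  have hm' : (m : ℝ) ≠ 0 := by positivity
  obtain ⟨t, ht⟩ := Nat.modEq_iff_dvd.mp hcb
  have htR : (c : ℝ) * b = 1 - m * t := by
    have : ((c * b : ℕ) : ℤ) = 1 - m * t := by linear_combination -ht
    exact_mod_cast this
  have hper : Periodic (fun j : ℕ => cot (π * j * c / m) * sin (2 * π * j / m)) m := fun j => by
    simp only
    rw [show π * (j + m : ℕ) * c / m = π * j * c / m + (c : ℤ) * π by push_cast; field_simp,
      show 2 * π * (j + m : ℕ) / m = 2 * π * j / m + 2 * π by push_cast; field_simp,
      cot_add_int_mul_pi, sin_add_two_pi]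
  rw [← hper.sum_range_comp_mul (Nat.coprime_of_mul_modEq_one c (by rwa [mul_comm]))]
  refine sum_congr rfl fun j _ => ?_
  rw [show π * (b * j : ℕ) * c / m = π * j / m + (-(j * t) : ℤ) * π by
      push_cast
      field_simp
      linear_combination (j : ℝ) * htR,
    cot_add_int_mul_pi]
  push_cast
  ring_nf

end Real

theorem fsTerm_natCast_mul {m b c : ℕ} (hb : 0 < b) (hbm : b < m) (hcb : c * b ≡ 1 [MOD m]) :
    fsTerm ((m * c : ℕ) : ℝ) m = 1 - 2 * b / m := by
  have hm : 0 < m := hb.trans hbm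
  have hm' : (m : ℝ) ≠ 0 := by positivity
  have hterm : ∀ j : ℕ, cot (π * j * ((m * c : ℕ) : ℝ) / m ^ 2) * cot (π * j / m) *
      sin (π * j / m) ^ 2 = cot (π * j * c / m) * sin (2 * π * j / m) / 2 := fun j => by
    rw [mul_assoc, cot_mul_sin_sq]
    push_cast
    field_simp
  calc fsTerm ((m * c : ℕ) : ℝ) m
      = (∑ j ∈ range m, cot (π * j * c / m) * sin (2 * π * j / m)) / m := by
        rw [fsTerm, sum_range_eq_add_sum_Icc _ hm]
        simp only [hterm, ← sum_div]
        simp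
    _ = (∑ j ∈ range m, cot (π * j / m) * sin (2 * π * j * b / m)) / m := by
        rw [sum_range_cot_mul_sin_eq hcb]
    _ = 1 - 2 * b / m := by
        rw [sum_range_eq_add_sum_Icc _ hm, sum_Icc_cot_mul_sin hb hbm]
        simp only [Nat.cast_zero, mul_zero, zero_mul, zero_div, sin_zero, zero_add]
        field_simp

theorem fsTerm_add_fsTerm_of_modEq_one {p q c : ℕ} (hp : 2 ≤ p) (hq : 2 ≤ q)
    (hpq : p.Coprime q) (hcp : c ≡ 1 [MOD p]) (hcq : c ≡ 1 [MOD q]) :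
    fsTerm ((p * q * c : ℕ) : ℝ) p + fsTerm ((p * q * c : ℕ) : ℝ) q = -2 / (p * q) := by
  obtain ⟨a, b, ha, hap, hb, hbq, hab⟩ := Nat.exists_mul_add_mul_eq_mul_add_one hp hq hpq
  have habZ : (q : ℤ) * a + p * b = p * q + 1 := by exact_mod_cast hab
  have hqa : q * a ≡ 1 [MOD p] :=
    Nat.modEq_iff_dvd.mpr ⟨b - q, by push_cast; linear_combination (-1 : ℤ) * habZ⟩
  have hpb : p * b ≡ 1 [MOD q] :=
    Nat.modEq_iff_dvd.mpr ⟨a - p, by push_cast; linear_combination (-1 : ℤ) * habZ⟩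
  have hterm_p : fsTerm ((p * q * c : ℕ) : ℝ) p = 1 - 2 * a / p := by
    rw [show p * q * c = p * (q * c) by ring]
    exact fsTerm_natCast_mul ha hap (by simpa [mul_right_comm] using hqa.mul hcp)
  have hterm_q : fsTerm ((p * q * c : ℕ) : ℝ) q = 1 - 2 * b / q := by
    rw [show p * q * c = q * (p * c) by ring]
    exact fsTerm_natCast_mul hb hbq (by simpa [mul_right_comm] using hpb.mul hcq)
  have habR : (q : ℝ) * a + p * b = p * q + 1 := by exact_mod_cast hab
  have hp0 : (p : ℝ) ≠ 0 := by norm_cast; omega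
  have hq0 : (q : ℝ) ≠ 0 := by norm_cast; omega
  rw [hterm_p, hterm_q]
  field_simp
  linear_combination (-2 : ℝ) * habR

theorem fsTerm_natCast_mul_of_eq_mul_add_one {n k r : ℕ} (hn : 0 < n) (hk : 0 < k)
    (hr : r = n * k + 1) : fsTerm ((r * n : ℕ) : ℝ) r = 2 * k / r - 1 := by
  have hkr : k < r := by
    have := Nat.le_mul_of_pos_left k hn
    omega
  have hrZ : (r : ℤ) = n * k + 1 := by exact_mod_cast hr
  have hinv : n * (r - k) ≡ 1 [MOD r] :=
    Nat.modEq_iff_dvd.mpr ⟨1 - n, by push_cast [hkr.le]; linear_combination (-1 : ℤ) * hrZ⟩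
  have hr0 : (r : ℝ) ≠ 0 := by norm_cast; omega
  rw [fsTerm_natCast_mul (by omega) (by omega) hinv, Nat.cast_sub hkr.le]
  field_simp
  ring

/-- For coprime integers `p, q ≥ 2` and `k ≥ 1`, setting `r := pqk + 1` (so that `p`, `q`, `r`
are pairwise coprime and `r ≥ 2`), one has `R(p, q, r) = -1`. -/
theorem stmt_17 (p q k : ℕ) (hp : 2 ≤ p) (hq : 2 ≤ q) (hpq : Nat.Coprime p q)
    (hk : 1 ≤ k) (r : ℕ) (hr : r = p * q * k + 1) :
    2 / ((p * q * r : ℕ) : ℝ) +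
      fsTerm ((p * q * r : ℕ) : ℝ) p +
      fsTerm ((p * q * r : ℕ) : ℝ) q +
      fsTerm ((p * q * r : ℕ) : ℝ) r = -1 := by
  have hrZ : (r : ℤ) = p * q * k + 1 := by exact_mod_cast hr
  have hrp : r ≡ 1 [MOD p] := Nat.modEq_iff_dvd.mpr ⟨-(q * k), by linear_combination -hrZ⟩
  have hrq : r ≡ 1 [MOD q] := Nat.modEq_iff_dvd.mpr ⟨-(p * k), by linear_combination -hrZ⟩
  have hterm_r : fsTerm ((p * q * r : ℕ) : ℝ) r = 2 * k / r - 1 := by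
    rw [show p * q * r = r * (p * q) by ring]
    exact fsTerm_natCast_mul_of_eq_mul_add_one (by positivity) hk hr
  rw [add_assoc (2 / _), fsTerm_add_fsTerm_of_modEq_one hp hq hpq hrp hrq, hterm_r]
  have hrR : (r : ℝ) = p * q * k + 1 := by exact_mod_cast hr
  have hp0 : (p : ℝ) ≠ 0 := by norm_cast; omega
  have hq0 : (q : ℝ) ≠ 0 := by norm_cast; omega
  have hr0 : (r : ℝ) ≠ 0 := by norm_cast; omega
  push_cast
  field_simp
  linear_combination (-2 : ℝ) * hrR
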